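/- Consider two agents and two indivisible items e_1, e_2 with additive valuations v_1(e_1) = v_1(e_2) = 1 and v_2(e_1) = v_2(e_2) = -1. Then the unique Pareto optimal allocation assigns both items to agent 1, and this allocation is neither equitable nor equitable up to one item; hence for mixed items, Pareto optimality is incompatible with EQ and with EQ1 even for two agents. -/

import Mathlib

/-! Suppose agent `i` values every item positively and every other agent values every item
nonpositively. Any allocation giving an item to someone other than `i` is Pareto dominated by
giving everything to `i`; and that allocation is Pareto optimal, since any other allocation makes
`i` strictly worse off. In it the other agents hold nothing while `i` keeps positive value after
removing any single item (there are at least two), so it is not even EQ1. -/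

open Finset

attribute [local instance] Classical.propDecidable

noncomputable section

/-- The bundle of agent `i` under deterministic allocation `A`. -/
def bundle {m n : ℕ} (A : Fin m → Fin n) (i : Fin n) : Finset (Fin m) :=
  Finset.univ.filter fun j => A j = i

/-- Additive value of a bundle. -/
def sval {m : ℕ} (f : Fin m → ℝ) (S : Finset (Fin m)) : ℝ := ∑ j ∈ S, f j

/-- Deterministic allocation `B` Pareto dominates `A`. -/
def ParetoDom {m n : ℕ} (v : Fin n → Fin m → ℝ) (B A : Fin m → Fin n) : Prop :=
  (∀ i, sval (v i) (bundle B i) ≥ sval (v i) (bundle A i)) ∧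
  ∃ i, sval (v i) (bundle B i) > sval (v i) (bundle A i)

/-- Pareto optimality. -/
def ParetoOpt {m n : ℕ} (v : Fin n → Fin m → ℝ) (A : Fin m → Fin n) : Prop :=
  ¬ ∃ B, ParetoDom v B A

/-- Equitability. -/
def EQ {m n : ℕ} (v : Fin n → Fin m → ℝ) (A : Fin m → Fin n) : Prop :=
  ∀ i j : Fin n, sval (v i) (bundle A i) = sval (v j) (bundle A j)

/-- Equitability up to one item. -/
def EQ1 {m n : ℕ} (v : Fin n → Fin m → ℝ) (A : Fin m → Fin n) : Prop :=
  ∀ i j : Fin n, sval (v i) (bundle A i) ≥ sval (v j) (bundle A j) ∨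
    ∃ e ∈ bundle A i ∪ bundle A j,
      sval (v i) ((bundle A i).erase e) ≥ sval (v j) ((bundle A j).erase e)

section Valuation

variable {m : ℕ} {f : Fin m → ℝ}

lemma sval_le_sval_univ (hf : ∀ j, 0 ≤ f j) (S : Finset (Fin m)) : sval f S ≤ sval f univ :=
  sum_le_sum_of_subset_of_nonneg (subset_univ S) fun j _ _ => hf j

lemma sval_lt_sval_univ (hf : ∀ j, 0 < f j) {S : Finset (Fin m)} {j : Fin m} (hj : j ∉ S) :
    sval f S < sval f univ :=
  sum_lt_sum_of_subset (subset_univ S) (mem_univ j) hj (hf j) fun k _ _ => (hf k).le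

lemma sval_nonpos (hf : ∀ j, f j ≤ 0) (S : Finset (Fin m)) : sval f S ≤ 0 :=
  sum_nonpos fun j _ => hf j

lemma sval_pos (hf : ∀ j, 0 < f j) {S : Finset (Fin m)} (hS : S.Nonempty) : 0 < sval f S :=
  sum_pos (fun j _ => hf j) hS

@[simp]
lemma sval_empty : sval f ∅ = 0 :=
  sum_empty

end Valuation

section Bundle

variable {m n : ℕ}

@[simp]
lemma mem_bundle {A : Fin m → Fin n} {i : Fin n} {j : Fin m} : j ∈ bundle A i ↔ A j = i := by
  simp [bundle]

@[simp]
lemma bundle_const_self (i : Fin n) : bundle (fun _ : Fin m => i) i = univ := by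
  ext j; simp

lemma bundle_const_of_ne {i k : Fin n} (h : k ≠ i) : bundle (fun _ : Fin m => i) k = ∅ := by
  ext j; simp [Ne.symm h]

end Bundle

section Allocation

variable {m n : ℕ} {v : Fin n → Fin m → ℝ} {i : Fin n}

lemma paretoDom_const_of_ne (hpos : ∀ j, 0 < v i j) (hnonpos : ∀ k ≠ i, ∀ j, v k j ≤ 0)
    {A : Fin m → Fin n} {j : Fin m} (hj : A j ≠ i) : ParetoDom v (fun _ => i) A := by
  refine ⟨fun k => ?_, i, ?_⟩
  · by_cases hk : k = i
    · subst hk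
      simpa using sval_le_sval_univ (fun j => (hpos j).le) (bundle A k)
    · simpa [bundle_const_of_ne hk] using sval_nonpos (hnonpos k hk) (bundle A k)
  · simpa using sval_lt_sval_univ hpos (mem_bundle.not.mpr hj)

lemma paretoOpt_const (hpos : ∀ j, 0 < v i j) : ParetoOpt v (fun _ => i) := by
  rintro ⟨B, hge, k, hgt⟩
  by_cases hB : ∀ j, B j = i
  · obtain rfl : B = fun _ => i := funext hB
    exact lt_irrefl _ hgt
  · obtain ⟨j, hj⟩ := not_forall.mp hB
    have hlt := sval_lt_sval_univ hpos (mem_bundle.not.mpr hj)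
    have := hge i
    simp only [bundle_const_self] at this
    linarith

theorem paretoOpt_iff_forall_eq (hpos : ∀ j, 0 < v i j) (hnonpos : ∀ k ≠ i, ∀ j, v k j ≤ 0)
    (A : Fin m → Fin n) : ParetoOpt v A ↔ ∀ j, A j = i := by
  constructor
  · intro hA j
    by_contra hj
    exact hA ⟨_, paretoDom_const_of_ne hpos hnonpos hj⟩
  · intro hA
    obtain rfl : A = fun _ => i := funext hA
    exact paretoOpt_const hpos

lemma EQ1_of_EQ {A : Fin m → Fin n} (h : EQ v A) : EQ1 v A :=
  fun i j => Or.inl (h i j).ge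

lemma not_EQ1_const [Nontrivial (Fin m)] (hpos : ∀ j, 0 < v i j) {k : Fin n} (hk : k ≠ i) :
    ¬ EQ1 v (fun _ => i) := by
  intro h
  rcases h k i with hge | ⟨e, -, hge⟩
  · rw [bundle_const_of_ne hk, bundle_const_self, sval_empty] at hge
    exact (sval_pos hpos univ_nonempty).not_ge hge
  · rw [bundle_const_of_ne hk, bundle_const_self, erase_empty, sval_empty] at hge
    exact (sval_pos hpos univ_nontrivial.erase_nonempty).not_ge hge

end Allocation

/-- for two agents and two items, with agent 1 valuing each item at 1 and
agent 2 valuing each item at -1, the unique Pareto optimal allocation assigns both items to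
agent 1, and this allocation is neither EQ nor EQ1; hence for mixed items PO is incompatible
with EQ and with EQ1 even for two agents. -/
theorem mixed_PO_incompatible_EQ_EQ1 (v : Fin 2 → Fin 2 → ℝ)
    (h1 : ∀ j, v 0 j = 1) (h2 : ∀ j, v 1 j = -1) :
    (∀ A : Fin 2 → Fin 2, ParetoOpt v A ↔ ∀ j, A j = 0) ∧
    (∀ A : Fin 2 → Fin 2, (∀ j, A j = 0) → ¬ EQ v A ∧ ¬ EQ1 v A) := by
  have hpos : ∀ j, 0 < v 0 j := fun j => by simp [h1]
  have hnonpos : ∀ k ≠ 0, ∀ j, v k j ≤ 0 := fun k hk j => by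
    simp [Fin.eq_one_of_ne_zero k hk, h2]
  refine ⟨paretoOpt_iff_forall_eq hpos hnonpos, fun A hA => ?_⟩
  obtain rfl : A = fun _ => 0 := funext hA
  have hEQ1 := not_EQ1_const hpos one_ne_zero
  exact ⟨fun hEQ => hEQ1 (EQ1_of_EQ hEQ), hEQ1⟩
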